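/- arXiv:2110.01648 — 2 statements merged into one kernel-verified Lean document; each statement's English description precedes it below -/
import Mathlib

section
/- Let ℓ : ℝ → ℝ be convex and differentiable with derivative ℓ' not identically zero and E_{w∼N(0,1)}|ℓ'(w·s + m)| < ∞ for all m, s. Then for any m ∈ ℝ, the function s ↦ E_{w∼N(0,1)}[ℓ(m + w·s)] is strictly increasing on (0, ∞); specifically its derivative equals ∫_0^∞ w[ℓ'(m + ws) - ℓ'(m - ws)]·φ(w) dw > 0, where φ is the standard normal density, provided ℓ' is strictly increasing at some point reached with positive measure. -/
/-!
Differentiating under the integral sign gives `d/ds E[ℓ(m + ws)] = E[w ℓ'(m + ws)]`. Monotonicity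
of `ℓ'` traps `ℓ'(m + ws)` between its values at `s₀ ± 1`, which gives the domination; the factor
`w` is absorbed by the Gaussian tail, `|w| φ(w) ≤ √2 φ₂(w)` with `φ₂` the `N(0, 2)` density, so the
hypothesis at scale `√2 s` makes `w ℓ'(m + ws)` integrable. Folding the integral onto `(0, ∞)` by
the symmetry of `φ` yields `∫₀^∞ w (ℓ'(m + ws) - ℓ'(m - ws)) φ(w) dw`, whose integrand is
nonnegative since `ℓ'` is monotone, and positive for large `w` since `ℓ'` is not constant.
-/

open MeasureTheory ProbabilityTheory Set
open scoped NNReal ENNReal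

section Gaussian

variable {E : Type*} [NormedAddCommGroup E]

lemma integrable_gaussianReal_iff [NormedSpace ℝ E] {μ : ℝ} {v : ℝ≥0} (hv : v ≠ 0) {f : ℝ → E} :
    Integrable f (gaussianReal μ v) ↔ Integrable (fun x => gaussianPDFReal μ v x • f x) := by
  rw [gaussianReal_of_var_ne_zero μ hv, integrable_withDensity_iff_integrable_smul'
    (measurable_gaussianPDF μ v) (ae_of_all _ fun _ => gaussianPDF_lt_top)]
  simp only [toReal_gaussianPDF]

lemma gaussianPDFReal_neg (v : ℝ≥0) (x : ℝ) :
    gaussianPDFReal 0 v (-x) = gaussianPDFReal 0 v x := by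
  simp [gaussianPDFReal]

lemma gaussianReal_map_sqrt_two_mul :
    (gaussianReal 0 1).map (Real.sqrt 2 * ·) = gaussianReal 0 2 := by
  rw [gaussianReal_map_const_mul]
  congr 1
  · simp
  · ext; simp

lemma integrable_gaussianReal_two_iff {f : ℝ → E} :
    Integrable f (gaussianReal 0 2) ↔
      Integrable (fun w => f (Real.sqrt 2 * w)) (gaussianReal 0 1) := by
  rw [← gaussianReal_map_sqrt_two_mul,
    (measurableEmbedding_mulLeft₀ (by positivity)).integrable_map_iff]
  rfl

lemma abs_mul_gaussianPDFReal_le (w : ℝ) :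
    |w| * gaussianPDFReal 0 1 w ≤ Real.sqrt 2 * gaussianPDFReal 0 2 w := by
  have hw : |w| ≤ Real.exp (w ^ 2 / 4) := by
    nlinarith [Real.add_one_le_exp (w ^ 2 / 4), sq_nonneg (|w| - 2), sq_abs w]
  have hexp : |w| * Real.exp (-w ^ 2 / 2) ≤ Real.exp (-w ^ 2 / 4) := calc
    |w| * Real.exp (-w ^ 2 / 2) ≤ Real.exp (w ^ 2 / 4) * Real.exp (-w ^ 2 / 2) := by gcongr
    _ = Real.exp (-w ^ 2 / 4) := by rw [← Real.exp_add]; ring_nf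
  have hsqrt : Real.sqrt (2 * Real.pi * 2) = Real.sqrt 2 * Real.sqrt (2 * Real.pi) := by
    rw [mul_comm, Real.sqrt_mul zero_le_two]
  simp only [gaussianPDFReal, NNReal.coe_one, NNReal.coe_ofNat, sub_zero, mul_one, hsqrt]
  calc _ = (√(2 * Real.pi))⁻¹ * (|w| * Real.exp (-w ^ 2 / 2)) := by ring
    _ ≤ (√(2 * Real.pi))⁻¹ * Real.exp (-w ^ 2 / 4) := by gcongr
    _ = _ := by field_simp; ring_nf

lemma integrable_id_mul_of_integrable_gaussianReal_two {f : ℝ → ℝ}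
    (hf : Integrable f (gaussianReal 0 2)) :
    Integrable (fun w => w * f w) (gaussianReal 0 1) := by
  have hmeas : AEStronglyMeasurable f volume :=
    hf.aestronglyMeasurable.mono_ac (gaussianReal_absolutelyContinuous' 0 two_ne_zero)
  rw [integrable_gaussianReal_iff two_ne_zero] at hf
  rw [integrable_gaussianReal_iff one_ne_zero]
  refine (hf.norm.const_mul (Real.sqrt 2)).mono' (by fun_prop) (ae_of_all _ fun w => ?_)
  simp only [smul_eq_mul, norm_mul, Real.norm_eq_abs, abs_of_nonneg (gaussianPDFReal_nonneg _ _ _)]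
  calc _ = |w| * gaussianPDFReal 0 1 w * |f w| := by ring
    _ ≤ Real.sqrt 2 * gaussianPDFReal 0 2 w * |f w| :=
      mul_le_mul_of_nonneg_right (abs_mul_gaussianPDFReal_le w) (abs_nonneg _)
    _ = _ := by ring

lemma integral_eq_integral_Ioi_add_comp_neg [NormedSpace ℝ E] {f : ℝ → E} (hf : Integrable f) :
    ∫ x, f x = ∫ x in Ioi 0, (f x + f (-x)) := by
  rw [integral_add hf.integrableOn hf.comp_neg.integrableOn, integral_comp_neg_Ioi, neg_zero,
    add_comm, intervalIntegral.integral_Iic_add_Ioi hf.integrableOn hf.integrableOn]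

variable {g : ℝ → ℝ} {m s : ℝ}

lemma integral_id_mul_comp_gaussianReal_eq_integral_Ioi
    (hg : Integrable (fun w => w * g (m + w * s)) (gaussianReal 0 1)) :
    ∫ w, w * g (m + w * s) ∂gaussianReal 0 1 =
      ∫ w in Ioi 0, w * (g (m + w * s) - g (m - w * s)) * gaussianPDFReal 0 1 w := by
  rw [integral_gaussianReal_eq_integral_smul one_ne_zero,
    integral_eq_integral_Ioi_add_comp_neg ((integrable_gaussianReal_iff one_ne_zero).1 hg)]
  refine setIntegral_congr_fun measurableSet_Ioi fun w _ => ?_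
  simp only [smul_eq_mul, gaussianPDFReal_neg, neg_mul, ← sub_eq_add_neg]
  ring

lemma integrableOn_Ioi_id_mul_sub_comp_mul_gaussianPDFReal
    (hg : Integrable (fun w => w * g (m + w * s)) (gaussianReal 0 1)) :
    IntegrableOn (fun w => w * (g (m + w * s) - g (m - w * s)) * gaussianPDFReal 0 1 w)
      (Ioi 0) := by
  have h := (integrable_gaussianReal_iff one_ne_zero).1 hg
  refine (h.add h.comp_neg).integrableOn.congr_fun (fun w _ => ?_) measurableSet_Ioi
  simp only [Pi.add_apply, smul_eq_mul, gaussianPDFReal_neg, neg_mul, ← sub_eq_add_neg]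
  ring

end Gaussian

lemma Monotone.abs_le_abs_add_abs_of_mem_uIcc {g : ℝ → ℝ} (hg : Monotone g) {a b x : ℝ}
    (hx : x ∈ uIcc a b) : |g x| ≤ |g a| + |g b| := by
  rcases mem_uIcc.1 hx with ⟨hax, hxb⟩ | ⟨hbx, hxa⟩
  · exact (abs_le_max_abs_abs (hg hax) (hg hxb)).trans
      (max_le_add_of_nonneg (abs_nonneg _) (abs_nonneg _))
  · rw [add_comm]
    exact (abs_le_max_abs_abs (hg hbx) (hg hxa)).trans
      (max_le_add_of_nonneg (abs_nonneg _) (abs_nonneg _))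

lemma Monotone.integral_Ioi_mul_sub_mul_pos {g ρ : ℝ → ℝ} (hg : Monotone g) {x y : ℝ}
    (hxy : g x < g y) {m s : ℝ} (hs : 0 < s) (hρ : ∀ w, 0 < ρ w)
    (hint : IntegrableOn (fun w => w * (g (m + w * s) - g (m - w * s)) * ρ w) (Ioi 0)) :
    0 < ∫ w in Ioi 0, w * (g (m + w * s) - g (m - w * s)) * ρ w := by
  have hnonneg : ∀ w ∈ Ioi (0 : ℝ), 0 ≤ w * (g (m + w * s) - g (m - w * s)) * ρ w :=
    fun w (hw : 0 < w) => mul_nonneg (mul_nonneg hw.le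
      (sub_nonneg.2 (hg (by nlinarith)))) (hρ w).le
  rw [setIntegral_pos_iff_support_of_nonneg_ae
    ((ae_restrict_iff' measurableSet_Ioi).2 (ae_of_all _ hnonneg)) hint]
  have hsupp : Ioi (max (max ((y - m) / s) ((m - x) / s)) 0) ⊆
      Function.support (fun w => w * (g (m + w * s) - g (m - w * s)) * ρ w) ∩ Ioi 0 := by
    intro w hw
    obtain ⟨⟨hyw, hxw⟩, hw⟩ : ((y - m) / s < w ∧ (m - x) / s < w) ∧ 0 < w := by
      simpa only [mem_Ioi, max_lt_iff] using hw
    rw [div_lt_iff₀ hs] at hyw hxw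
    have hgap : g (m - w * s) < g (m + w * s) :=
      (hg (by linarith : m - w * s ≤ x)).trans_lt (hxy.trans_le (hg (by linarith)))
    exact ⟨(mul_pos (mul_pos hw (sub_pos.2 hgap)) (hρ w)).ne', hw⟩
  exact (by simp : (0 : ℝ≥0∞) < volume (Ioi _)).trans_le (measure_mono hsupp)

section SmoothedLoss

variable {ℓ : ℝ → ℝ} {μ : Measure ℝ} {m : ℝ}

lemma abs_sub_le_of_monotone_deriv (hℓ : Differentiable ℝ ℓ) (hmono : Monotone (deriv ℓ))
    (a b : ℝ) : |ℓ b - ℓ a| ≤ (|deriv ℓ a| + |deriv ℓ b|) * |b - a| :=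
  (convex_uIcc a b).norm_image_sub_le_of_norm_deriv_le (fun x _ => hℓ x)
    (fun _ hx => hmono.abs_le_abs_add_abs_of_mem_uIcc hx) left_mem_uIcc right_mem_uIcc

lemma integrable_comp_add_mul [IsFiniteMeasure μ] (hℓ : Differentiable ℝ ℓ)
    (hmono : Monotone (deriv ℓ)) (hid : Integrable id μ) {s : ℝ}
    (hint : Integrable (fun w => w * deriv ℓ (m + w * s)) μ) :
    Integrable (fun w => ℓ (m + w * s)) μ := by
  refine ((integrable_const |ℓ m|).add ((hid.norm.const_mul (|deriv ℓ m| * |s|)).add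
    (hint.norm.const_mul |s|))).mono' (hℓ.continuous.comp_aestronglyMeasurable (by fun_prop))
    (ae_of_all _ fun w => ?_)
  have h := abs_sub_le_of_monotone_deriv hℓ hmono m (m + w * s)
  rw [add_sub_cancel_left, abs_mul] at h
  simp only [Real.norm_eq_abs, id, norm_mul, Pi.add_apply]
  nlinarith [abs_sub_abs_le_abs_sub (ℓ (m + w * s)) (ℓ m), abs_nonneg w, abs_nonneg s]

lemma hasDerivAt_integral_comp_add_mul (hℓ : Differentiable ℝ ℓ) (hmono : Monotone (deriv ℓ))
    {s₀ : ℝ} (hℓint : Integrable (fun w => ℓ (m + w * s₀)) μ)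
    (hint : ∀ s, Integrable (fun w => w * deriv ℓ (m + w * s)) μ) :
    HasDerivAt (fun s => ∫ w, ℓ (m + w * s) ∂μ) (∫ w, w * deriv ℓ (m + w * s₀) ∂μ) s₀ := by
  refine (hasDerivAt_integral_of_dominated_loc_of_deriv_le (F := fun s w => ℓ (m + w * s))
    (F' := fun s w => w * deriv ℓ (m + w * s))
    (bound := fun w => ‖w * deriv ℓ (m + w * (s₀ - 1))‖ + ‖w * deriv ℓ (m + w * (s₀ + 1))‖)
    (Metric.ball_mem_nhds s₀ one_pos)
    (Filter.Eventually.of_forall fun s =>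
      hℓ.continuous.comp_aestronglyMeasurable (by fun_prop))
    hℓint (hint s₀).aestronglyMeasurable (ae_of_all _ fun w s hs => ?_)
    ((hint _).norm.add (hint _).norm) (ae_of_all _ fun w s _ => ?_)).2
  · rw [Real.ball_eq_Ioo, mem_Ioo] at hs
    have hmem : m + w * s ∈ uIcc (m + w * (s₀ - 1)) (m + w * (s₀ + 1)) := by
      rcases le_total 0 w with hw | hw
      · exact mem_uIcc.2 (Or.inl ⟨by nlinarith, by nlinarith⟩)
      · exact mem_uIcc.2 (Or.inr ⟨by nlinarith, by nlinarith⟩)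
    rw [norm_mul, norm_mul, norm_mul, ← mul_add]
    exact mul_le_mul_of_nonneg_left (hmono.abs_le_abs_add_abs_of_mem_uIcc hmem) (norm_nonneg w)
  · simpa only [Function.comp_def, id, mul_one, mul_comm (deriv ℓ _)] using
      (hℓ (m + w * s)).hasDerivAt.comp s (((hasDerivAt_id s).const_mul w).const_add m)

end SmoothedLoss

/-- For a convex differentiable loss `ℓ` whose derivative is integrable against the
Gaussian and not constant, the Gaussian-smoothed loss `s ↦ E_{w∼N(0,1)}[ℓ(m + w·s)]`
is strictly increasing on `(0,∞)`, with derivative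
`∫_0^∞ w·(ℓ'(m+ws) - ℓ'(m-ws))·φ(w) dw > 0`. -/
theorem gaussian_smoothed_loss_strictMono_in_scale
    (ℓ : ℝ → ℝ) (hconv : ConvexOn ℝ Set.univ ℓ)
    (hdiff : ∀ x : ℝ, HasDerivAt ℓ (deriv ℓ x) x)
    (hint : ∀ m s : ℝ, Integrable (fun w => |deriv ℓ (m + w * s)|) (gaussianReal 0 1))
    (hnc : ∃ x y : ℝ, x < y ∧ deriv ℓ x < deriv ℓ y)
    (m : ℝ) :
    StrictMonoOn (fun s : ℝ => ∫ w, ℓ (m + w * s) ∂(gaussianReal 0 1)) (Set.Ioi 0) ∧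
    ∀ s : ℝ, 0 < s →
      HasDerivAt (fun s : ℝ => ∫ w, ℓ (m + w * s) ∂(gaussianReal 0 1))
        (∫ w in Set.Ioi (0:ℝ),
          w * (deriv ℓ (m + w * s) - deriv ℓ (m - w * s)) * gaussianPDFReal 0 1 w) s ∧
      0 < ∫ w in Set.Ioi (0:ℝ),
          w * (deriv ℓ (m + w * s) - deriv ℓ (m - w * s)) * gaussianPDFReal 0 1 w := by
  have hℓ : Differentiable ℝ ℓ := fun x => (hdiff x).differentiableAt
  have hmono : Monotone (deriv ℓ) :=
    monotoneOn_univ.1 (hconv.monotoneOn_deriv fun x _ => hℓ x)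
  have hint_mul : ∀ s, Integrable (fun w => w * deriv ℓ (m + w * s)) (gaussianReal 0 1) := by
    intro s
    refine integrable_id_mul_of_integrable_gaussianReal_two (integrable_gaussianReal_two_iff.2 ?_)
    refine (integrable_norm_iff
      ((measurable_deriv ℓ).comp (by fun_prop)).aestronglyMeasurable).1 ?_
    simpa only [Function.comp_apply, Real.norm_eq_abs, mul_left_comm _ (Real.sqrt 2),
      mul_assoc] using hint m (Real.sqrt 2 * s)
  have hderiv : ∀ s, HasDerivAt (fun s : ℝ => ∫ w, ℓ (m + w * s) ∂(gaussianReal 0 1))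
      (∫ w in Ioi 0, w * (deriv ℓ (m + w * s) - deriv ℓ (m - w * s)) * gaussianPDFReal 0 1 w)
      s := fun s => by
    rw [← integral_id_mul_comp_gaussianReal_eq_integral_Ioi (hint_mul s)]
    exact hasDerivAt_integral_comp_add_mul hℓ hmono
      (integrable_comp_add_mul hℓ hmono IsGaussian.integrable_id (hint_mul s)) hint_mul
  obtain ⟨x, y, -, hxy⟩ := hnc
  have hpos : ∀ s, 0 < s →
      0 < ∫ w in Ioi 0, w * (deriv ℓ (m + w * s) - deriv ℓ (m - w * s)) * gaussianPDFReal 0 1 w :=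
    fun s hs => hmono.integral_Ioi_mul_sub_mul_pos hxy hs
      (fun w => gaussianPDFReal_pos 0 1 w one_ne_zero)
      (integrableOn_Ioi_id_mul_sub_comp_mul_gaussianPDFReal (hint_mul s))
  refine ⟨strictMonoOn_of_deriv_pos (convex_Ioi 0)
    (fun s _ => (hderiv s).continuousAt.continuousWithinAt) fun s hs => ?_,
    fun s hs => ⟨hderiv s, hpos s hs⟩⟩
  rw [interior_Ioi] at hs
  exact (hderiv s).deriv ▸ hpos s hs
end

section
/- Let Z be an n×p real matrix, σ > 0, and let V be a p×r matrix with orthonormal columns such that every row of Z lies in the column span of V (i.e., Z·V·Vᵀ = Z). Then (ZᵀZ + nσ·VVᵀ)⁺ (Zᵀ𝟙) = (ZᵀZ + nσ·I)⁻¹ (Zᵀ𝟙), where M⁺ denotes the Moore–Penrose pseudoinverse, I is the p×p identity, and 𝟙 ∈ ℝⁿ is the all-ones vector. -/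
open Matrix

/-!
Put `Q = VVᵀ`, the orthogonal projection onto the column span of `V`, and
`A = ZᵀZ + nσ·I`, which is positive definite. Since `ZQ = Z`, `A` commutes with `Q` and
`M = AQ = QA`. The Penrose conditions `MPM = M` and `(PM)ᵀ = PM` then force `PM = Q`,
hence `PQ = PMA⁻¹ = QA⁻¹ = A⁻¹Q`, and `Zᵀ = QZᵀ` gives `PZᵀ = A⁻¹Zᵀ`.
-/

namespace Matrix

variable {m R : Type*} [Fintype m] [DecidableEq m] [CommRing R]

theorem mul_eq_proj_of_penrose {A M P Q : Matrix m m R} (hA : IsUnit A.det)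
    (hQ : Qᵀ = Q) (hQQ : Q * Q = Q) (hAQ : A * Q = M)
    (h1 : M * P * M = M) (h4 : (P * M)ᵀ = P * M) : P * M = Q := by
  have hAM : A⁻¹ * M = Q := hAQ ▸ nonsing_inv_mul_cancel_left A Q hA
  have hMQ : M * Q = M := by rw [← hAQ, Matrix.mul_assoc, hQQ]
  have hQPM : Q * (P * M) = P * M := by
    simpa only [transpose_mul, hQ, h4] using
      congrArg transpose (show P * M * Q = P * M by rw [Matrix.mul_assoc, hMQ])
  calc P * M = Q * (P * M) := hQPM.symm
    _ = A⁻¹ * (M * P * M) := by rw [← hAM, Matrix.mul_assoc, Matrix.mul_assoc]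
    _ = Q := by rw [h1, hAM]

theorem mul_proj_eq_inv_mul_proj_of_penrose {A M P Q : Matrix m m R} (hA : IsUnit A.det)
    (hQ : Qᵀ = Q) (hQQ : Q * Q = Q) (hAQ : A * Q = M) (hQA : Q * A = M)
    (h1 : M * P * M = M) (h4 : (P * M)ᵀ = P * M) : P * Q = A⁻¹ * Q := by
  have hAM : A⁻¹ * M = Q := hAQ ▸ nonsing_inv_mul_cancel_left A Q hA
  have hMA : M * A⁻¹ = Q := hQA ▸ mul_nonsing_inv_cancel_right A Q hA
  calc P * Q = P * M * A⁻¹ := by rw [Matrix.mul_assoc, hMA]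
    _ = A⁻¹ * M * A⁻¹ := by rw [mul_eq_proj_of_penrose hA hQ hQQ hAQ h1 h4, hAM]
    _ = A⁻¹ * Q := by rw [Matrix.mul_assoc, hMA]

end Matrix

theorem Matrix.posDef_transpose_mul_self_add_smul_one {m k : Type*} [Fintype m] [Fintype k]
    [DecidableEq k] (Z : Matrix m k ℝ) {c : ℝ} (hc : 0 < c) : (Zᵀ * Z + c • 1).PosDef := by
  refine PosDef.posSemidef_add ?_ (PosDef.one.smul hc)
  simpa only [conjTranspose_eq_transpose_of_trivial] using posSemidef_conjTranspose_mul_self Z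

theorem pseudoinverse_ridge_identity_general
    {n p r : ℕ} (Z : Matrix (Fin n) (Fin p) ℝ) (V : Matrix (Fin p) (Fin r) ℝ)
    (σ : ℝ) (hσ : 0 < σ) (hn : 1 ≤ n)
    (hV : Vᵀ * V = 1) (hZV : Z * V * Vᵀ = Z)
    (P : Matrix (Fin p) (Fin p) ℝ)
    (M : Matrix (Fin p) (Fin p) ℝ)
    (hM : M = Zᵀ * Z + (n : ℝ) • (σ • (V * Vᵀ)))
    (h1 : M * P * M = M)
    (h4 : (P * M)ᵀ = P * M) :
    P *ᵥ (Zᵀ *ᵥ (fun _ => 1)) =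
      (Zᵀ * Z + (n : ℝ) • (σ • (1 : Matrix (Fin p) (Fin p) ℝ)))⁻¹ *ᵥ
        (Zᵀ *ᵥ (fun _ => 1)) := by
  rw [smul_smul] at hM ⊢
  set A := Zᵀ * Z + ((n : ℝ) * σ) • (1 : Matrix (Fin p) (Fin p) ℝ)
  set Q := V * Vᵀ
  have hQ : Qᵀ = Q := by rw [transpose_mul, transpose_transpose]
  have hQQ : Q * Q = Q := by rw [Matrix.mul_assoc, ← Matrix.mul_assoc Vᵀ, hV, Matrix.one_mul]
  have hZQ : Z * Q = Z := by rw [← Matrix.mul_assoc, hZV]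
  have hQZ : Q * Zᵀ = Zᵀ := by simpa only [transpose_mul, hQ] using congrArg transpose hZQ
  have hA : IsUnit A.det :=
    (posDef_transpose_mul_self_add_smul_one Z
      (mul_pos (Nat.cast_pos.mpr hn) hσ)).det_pos.ne'.isUnit
  have hAQ : A * Q = M := by
    rw [hM, Matrix.add_mul, Matrix.mul_assoc, hZQ, smul_mul_assoc, Matrix.one_mul]
  have hQA : Q * A = M := by
    rw [hM, Matrix.mul_add, ← Matrix.mul_assoc, hQZ, mul_smul_comm, Matrix.mul_one]
  have hPQ := mul_proj_eq_inv_mul_proj_of_penrose hA hQ hQQ hAQ hQA h1 h4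
  calc P *ᵥ (Zᵀ *ᵥ fun _ => 1) = (P * Q * Zᵀ) *ᵥ fun _ => 1 := by
        rw [mulVec_mulVec, Matrix.mul_assoc, hQZ]
    _ = A⁻¹ *ᵥ (Zᵀ *ᵥ fun _ => 1) := by rw [hPQ, Matrix.mul_assoc, hQZ, mulVec_mulVec]

/-- If every row of `Z` lies in the column span of `V` (where `VᵀV = I`), then the
Moore–Penrose pseudoinverse `(ZᵀZ + nσ·VVᵀ)⁺` applied to `Zᵀ𝟙` agrees with
`(ZᵀZ + nσ·I)⁻¹ Zᵀ𝟙`. Here `P` is any matrix satisfying the four Penrose conditions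
for `M = ZᵀZ + nσ·VVᵀ` (which uniquely characterize the pseudoinverse). -/
theorem pseudoinverse_ridge_identity
    {n p r : ℕ} (Z : Matrix (Fin n) (Fin p) ℝ) (V : Matrix (Fin p) (Fin r) ℝ)
    (σ : ℝ) (hσ : 0 < σ) (hn : 1 ≤ n)
    (hV : Vᵀ * V = 1) (hZV : Z * V * Vᵀ = Z)
    (P : Matrix (Fin p) (Fin p) ℝ)
    (M : Matrix (Fin p) (Fin p) ℝ)
    (hM : M = Zᵀ * Z + (n : ℝ) • (σ • (V * Vᵀ)))
    (h1 : M * P * M = M) (h2 : P * M * P = P)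
    (h3 : (M * P)ᵀ = M * P) (h4 : (P * M)ᵀ = P * M) :
    P *ᵥ (Zᵀ *ᵥ (fun _ => 1)) =
      (Zᵀ * Z + (n : ℝ) • (σ • (1 : Matrix (Fin p) (Fin p) ℝ)))⁻¹ *ᵥ
        (Zᵀ *ᵥ (fun _ => 1)) :=
  pseudoinverse_ridge_identity_general Z V σ hσ hn hV hZV P M hM h1 h4
end
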